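/- arXiv:2403.03062 — 4 statements merged into one kernel-verified Lean document; each statement's English description precedes it below -/
import Mathlib

section
/- Let k be an infinite field and m, n ≥ 1, t ≥ 0, N ≥ 0 integers. Let P ⊆ R = k[X_1,…,X_m,Z_1,…,Z_n] be a prime ideal such that the Krull dimension of R/P equals n + t. If there exists C_0 ∈ k[X]_{≤N} with Z_1 − C_0 ∈ P, then the k-subspace k[X]_{≤N} ∩ P has codimension ≥ N+1 in k[X]_{≤N} (equivalently, the image of k[X]_{≤N} under the quotient map R → R/P has k-dimension ≥ N+1); consequently the set {C ∈ k[X]_{≤N} : Z_1 − C ∈ P} is a coset of k[X]_{≤N} ∩ P, an affine subspace of codimension ≥ N+1. -/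
open MvPolynomial Pointwise

/-! If every `X_i` were algebraic over `k` in `A = R ⧸ P`, then so would be `Z_1 ≡ C₀(X)`,
and `A` would be integral over its subalgebra generated by `Z_2, …, Z_n`, a quotient of a
polynomial ring in `n - 1` variables; integral extensions do not raise Krull dimension, so
`dim A ≤ n - 1 < n + t`. Hence some `X_i` is transcendental in `A`, and `1, X_i, …, X_i ^ N`
are linearly independent elements of the image of `k[X]_{≤N}`. -/

/-- The `k`-subspace `k[X]_{≤ N}` of `R = k[X_1,…,X_m,Z_1,…,Z_n]`
(the `X`-variables indexed by `Sum.inl`, the `Z`-variables by `Sum.inr`),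
consisting of the polynomials in the `X`-variables of total degree `≤ N`. -/
noncomputable def degLE (k : Type*) [Field k] (m n N : ℕ) :
    Submodule k (MvPolynomial (Fin m ⊕ Fin n) k) :=
  (MvPolynomial.restrictTotalDegree (Fin m) k N).map
    (MvPolynomial.rename (Sum.inl : Fin m → Fin m ⊕ Fin n) :
      MvPolynomial (Fin m) k →ₐ[k] MvPolynomial (Fin m ⊕ Fin n) k).toLinearMap

theorem Transcendental.linearIndependent_pow {R A : Type*} [CommRing R] [CommRing A]
    [Algebra R A] {x : A} (hx : Transcendental R x) : LinearIndependent R (x ^ · : ℕ → A) := by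
  have := (Polynomial.basisMonomials R).linearIndependent.map' (Polynomial.aeval x).toLinearMap
    (LinearMap.ker_eq_bot.2 ((transcendental_iff_injective).1 hx))
  simpa [Function.comp_def] using this

theorem Transcendental.natCast_le_rank_of_pow_mem {k A : Type*} [Field k] [CommRing A]
    [Algebra k A] {x : A} (hx : Transcendental k x) {M : Submodule k A} {d : ℕ}
    (hM : ∀ j < d, x ^ j ∈ M) : (d : Cardinal) ≤ Module.rank k M := by
  have hli : LinearIndependent k (fun j : Fin d => (⟨x ^ (j : ℕ), hM j j.2⟩ : M)) :=
    .of_comp M.subtype (hx.linearIndependent_pow.comp _ Fin.val_injective)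
  simpa using hli.cardinal_lift_le_rank

theorem Submodule.setOf_mem_and_sub_mem_eq_vadd_inf {k M : Type*} [Ring k] [AddCommGroup M]
    [Module k M] (V W : Submodule k M) {z c₀ : M} (hc₀ : c₀ ∈ V) (hz : z - c₀ ∈ W) :
    {c | c ∈ V ∧ z - c ∈ W} = c₀ +ᵥ ((V ⊓ W : Submodule k M) : Set M) := by
  ext c
  rw [Set.mem_vadd_set_iff_neg_vadd_mem, vadd_eq_add, neg_add_eq_sub]
  simp only [Set.mem_ofPred_eq, SetLike.mem_coe, Submodule.mem_inf]
  have hW : z - c ∈ W ↔ c - c₀ ∈ W := by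
    rw [← W.sub_mem_iff_left hz, sub_sub_sub_cancel_left, ← W.neg_mem_iff, neg_sub]
  rw [hW, V.sub_mem_iff_left hc₀]

theorem ringKrullDim_le_of_isIntegral (R S : Type*) [CommRing R] [CommRing S] [Algebra R S]
    [Algebra.IsIntegral R S] : ringKrullDim S ≤ ringKrullDim R :=
  Order.krullDim_le_of_strictMono (PrimeSpectrum.comap (algebraMap R S))
    fun _ _ h => Ideal.IsIntegral.comap_lt_comap (R := R) h

theorem ringKrullDim_range_aeval_le {k A σ : Type*} [Field k] [CommRing A] [Algebra k A]
    [Finite σ] (w : σ → A) : ringKrullDim (aeval (R := k) w).range ≤ Nat.card σ := by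
  calc ringKrullDim (aeval (R := k) w).range
      ≤ ringKrullDim (MvPolynomial σ k) :=
        ringKrullDim_le_of_surjective _ (AlgHom.rangeRestrict_surjective _)
    _ = Nat.card σ := by simp [ringKrullDim_eq_zero_of_field]

theorem MvPolynomial.range_le_of_forall_X_mem {R A σ : Type*} [CommSemiring R] [CommSemiring A]
    [Algebra R A] (f : MvPolynomial σ R →ₐ[R] A) {S : Subalgebra R A} (h : ∀ i, f (X i) ∈ S) :
    f.range ≤ S := by
  rw [aeval_unique f, aeval_range]
  exact Algebra.adjoin_le (Set.range_subset_iff.2 h)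

section

variable {k ι τ : Type*} [Field k] (P : Ideal (MvPolynomial (ι ⊕ τ) k))

theorem isIntegral_of_isAlgebraic_mk_X_inl {j₀ : τ} {D : MvPolynomial ι k}
    (hD : X (.inr j₀) - rename .inl D ∈ P)
    (halg : ∀ i, IsAlgebraic k (Ideal.Quotient.mk P (X (.inl i)))) :
    Algebra.IsIntegral
      (aeval (R := k) fun j : {j // j ≠ j₀} => Ideal.Quotient.mk P (X (.inr j.1))).range
      (MvPolynomial (ι ⊕ τ) k ⧸ P) := by
  set B := (aeval (R := k) fun j : {j // j ≠ j₀} => Ideal.Quotient.mk P (X (.inr j.1))).range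
  let S : Subalgebra k (MvPolynomial (ι ⊕ τ) k ⧸ P) := (integralClosure B _).restrictScalars k
  have hx (i : ι) : Ideal.Quotient.mkₐ k P (X (.inl i)) ∈ S :=
    (halg i).isIntegral.tower_top
  have hz₀ : Ideal.Quotient.mkₐ k P (X (.inr j₀)) ∈ S := by
    have hD' : Ideal.Quotient.mkₐ k P (X (.inr j₀)) =
        ((Ideal.Quotient.mkₐ k P).comp (rename .inl)) D :=
      Ideal.Quotient.eq.2 hD
    rw [hD']
    exact range_le_of_forall_X_mem _ (fun i => by simpa using hx i) ⟨D, rfl⟩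
  have hz {j : τ} (hj : j ≠ j₀) : Ideal.Quotient.mkₐ k P (X (.inr j)) ∈ S :=
    isIntegral_algebraMap
      (x := (⟨Ideal.Quotient.mk P (X (.inr j)), X ⟨j, hj⟩, aeval_X _ _⟩ : B))
  refine ⟨fun a => ?_⟩
  obtain ⟨p, rfl⟩ := Ideal.Quotient.mkₐ_surjective k P a
  refine range_le_of_forall_X_mem _ (S := S) ?_ ⟨p, rfl⟩
  rintro (i | j)
  · exact hx i
  · by_cases hj : j = j₀
    · exact hj ▸ hz₀
    · exact hz hj

theorem exists_transcendental_mk_X_inl [Finite τ] {j₀ : τ} {D : MvPolynomial ι k}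
    (hD : X (.inr j₀) - rename .inl D ∈ P)
    (hdim : (Nat.card τ : WithBot ℕ∞) ≤ ringKrullDim (MvPolynomial (ι ⊕ τ) k ⧸ P)) :
    ∃ i, Transcendental k (Ideal.Quotient.mk P (X (.inl i))) := by
  by_contra! halg
  simp only [Transcendental, not_not] at halg
  have := isIntegral_of_isAlgebraic_mk_X_inl P hD halg
  have hle := hdim.trans <| (ringKrullDim_le_of_isIntegral _ _).trans <|
    ringKrullDim_range_aeval_le (k := k)
      fun j : {j // j ≠ j₀} => Ideal.Quotient.mk P (X (.inr j.1))
  have : Nat.card τ ≤ Nat.card {j // j ≠ j₀} := by exact_mod_cast hle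
  exact (Finite.card_subtype_lt (p := (· ≠ j₀)) (not_not.2 rfl)).not_ge this

end

theorem X_inl_pow_mem_degLE {k : Type*} [Field k] {m n N : ℕ} (i : Fin m) {j : ℕ} (hj : j ≤ N) :
    X (.inl i) ^ j ∈ degLE k m n N :=
  Submodule.mem_map.2 ⟨X i ^ j, (mem_restrictTotalDegree _ _ _).2 (by simpa using hj), by simp⟩

theorem stmt0_general (k : Type*) [Field k] (m n t N : ℕ) (hn : 1 ≤ n)
    (P : Ideal (MvPolynomial (Fin m ⊕ Fin n) k))
    (hdim : ringKrullDim (MvPolynomial (Fin m ⊕ Fin n) k ⧸ P) = ((n + t : ℕ) : WithBot ℕ∞))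
    (hexists : ∃ C₀ ∈ degLE k m n N, MvPolynomial.X (Sum.inr ⟨0, hn⟩) - C₀ ∈ P) :
    (((N + 1 : ℕ) : Cardinal) ≤
      Module.rank k ((degLE k m n N).map (Ideal.Quotient.mkₐ k P).toLinearMap)) ∧
    ∀ C₀ ∈ degLE k m n N, MvPolynomial.X (Sum.inr ⟨0, hn⟩) - C₀ ∈ P →
      {C | C ∈ degLE k m n N ∧ MvPolynomial.X (Sum.inr ⟨0, hn⟩) - C ∈ P} =
        C₀ +ᵥ ((degLE k m n N ⊓ P.restrictScalars k : Submodule k _) : Set _) := by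
  obtain ⟨_, hC₀, hZ⟩ := hexists
  obtain ⟨D, -, rfl⟩ := Submodule.mem_map.1 hC₀
  have hcard : (Nat.card (Fin n) : WithBot ℕ∞) ≤ ((n + t : ℕ) : WithBot ℕ∞) := by
    simp only [Nat.card_eq_fintype_card, Fintype.card_fin]; exact_mod_cast Nat.le_add_right n t
  obtain ⟨i, hi⟩ := exists_transcendental_mk_X_inl P hZ (hdim ▸ hcard)
  refine ⟨hi.natCast_le_rank_of_pow_mem fun j hj => ?_, fun C₀ hC₀ hZ =>
    Submodule.setOf_mem_and_sub_mem_eq_vadd_inf _ (P.restrictScalars k) hC₀ hZ⟩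
  rw [← map_pow, ← Ideal.Quotient.mkₐ_eq_mk k]
  exact Submodule.mem_map_of_mem (X_inl_pow_mem_degLE i (Nat.lt_succ_iff.1 hj))

/-- Let `k` be an infinite field, `m, n ≥ 1`, `t, N ≥ 0`, and let
`P ⊆ R = k[X_1,…,X_m,Z_1,…,Z_n]` be a prime ideal with `dim (R ⧸ P) = n + t`.
If there is some `C₀ ∈ k[X]_{≤N}` with `Z_1 - C₀ ∈ P`, then the image of `k[X]_{≤N}` in
`R ⧸ P` has `k`-dimension `≥ N + 1` (equivalently, `k[X]_{≤N} ∩ P` has codimension `≥ N + 1`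
in `k[X]_{≤N}`); consequently, `{C ∈ k[X]_{≤N} : Z_1 - C ∈ P}` is a coset of
`k[X]_{≤N} ∩ P`, an affine subspace of codimension `≥ N + 1`. -/
theorem stmt0 (k : Type*) [Field k] [Infinite k] (m n t N : ℕ) (hm : 1 ≤ m) (hn : 1 ≤ n)
    (P : Ideal (MvPolynomial (Fin m ⊕ Fin n) k)) (hP : P.IsPrime)
    (hdim : ringKrullDim (MvPolynomial (Fin m ⊕ Fin n) k ⧸ P) = ((n + t : ℕ) : WithBot ℕ∞))
    (hexists : ∃ C₀ ∈ degLE k m n N, MvPolynomial.X (Sum.inr ⟨0, hn⟩) - C₀ ∈ P) :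
    (((N + 1 : ℕ) : Cardinal) ≤
      Module.rank k ((degLE k m n N).map (Ideal.Quotient.mkₐ k P).toLinearMap)) ∧
    ∀ C₀ ∈ degLE k m n N, MvPolynomial.X (Sum.inr ⟨0, hn⟩) - C₀ ∈ P →
      {C | C ∈ degLE k m n N ∧ MvPolynomial.X (Sum.inr ⟨0, hn⟩) - C ∈ P} =
        C₀ +ᵥ ((degLE k m n N ⊓ P.restrictScalars k : Submodule k _) : Set _) :=
  stmt0_general k m n t N hn P hdim hexists
end

section
/- For every integer n ≥ 0, every permutation σ of {0,…,n} and every integer 0 ≤ i ≤ n−1, one has the equality of linear maps R^n → R^{n+1}: sd_n^σ ∘ ∂_i = sd_n^{σ∘(i,i+1)} ∘ ∂_i, where (i,i+1) denotes the transposition of i and i+1. -/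
/-!  Subdivision of simplices, modeled linearly.

The algebraic `n`-simplex over a commutative ring `R` is modeled by the hyperplane
`{t ∈ R^{n+1} : ∑ t_j = 1}` inside the free module `R^{n+1} = (Fin (n+1) → R)`; its vertices
are the standard basis vectors, and affine-linear maps of simplices are extended to the linear
maps of the ambient free modules determined by the images of the vertices. -/

/-- The linear map `R^a → M` sending the `j`-th standard basis vector to `v j`. -/
noncomputable def ofVecs {R : Type*} [CommRing R] {a : ℕ} {M : Type*} [AddCommGroup M]
    [Module R M] (v : Fin a → M) : (Fin a → R) →ₗ[R] M where
  toFun t := ∑ j, t j • v j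
  map_add' t s := by simp [add_smul, Finset.sum_add_distrib]
  map_smul' r t := by simp [smul_smul, Finset.smul_sum]

/-- The face map `∂_i : R^a → R^{a+1}`, sending `e_j` to `e_j` for `j < i` and to `e_{j+1}`
for `j ≥ i`. -/
noncomputable def face (R : Type*) [CommRing R] (a : ℕ) (i : Fin (a + 1)) :
    (Fin a → R) →ₗ[R] (Fin (a + 1) → R) :=
  ofVecs fun j => Pi.single (i.succAbove j) 1

/-- Given centers `c^s ∈ R^{s+1}` and a nonempty subset `S ⊆ {0,…,n}` with `s+1` elements,
`cS c S = i_S (c^s) ∈ R^{n+1}` is the image of `c^s` under the linear map `i_S` sending `e_j`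
to `e_{σ_S j}`, where `σ_S : {0,…,s} → S` is the order-preserving bijection.  (For `S = ∅` it
is `0`; this value is never used.) -/
noncomputable def cS {R : Type*} [CommRing R] (c : (s : ℕ) → Fin (s + 1) → R) {n : ℕ}
    (S : Finset (Fin (n + 1))) : Fin (n + 1) → R := fun l =>
  if h : l ∈ S then
    c (S.card - 1) ⟨((S.orderIsoOfFin rfl).symm ⟨l, h⟩ : Fin S.card), by
      have h1 : 0 < S.card := Finset.card_pos.mpr ⟨l, h⟩
      have h2 := ((S.orderIsoOfFin rfl).symm ⟨l, h⟩).isLt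
      omega⟩
  else 0

/-- The subdivision map `sd_n^σ : R^{n+1} → R^{n+1}`, the linear map sending the vertex `e_k`
to `c^n_{σ({0,…,k})}` for `0 ≤ k ≤ n`. -/
noncomputable def sd (R : Type*) [CommRing R] (c : (s : ℕ) → Fin (s + 1) → R) (n : ℕ)
    (σ : Equiv.Perm (Fin (n + 1))) : (Fin (n + 1) → R) →ₗ[R] (Fin (n + 1) → R) :=
  ofVecs fun j => cS c ((Finset.Iic j).image σ)

/-- The homotopy map `sd_{n,k}^σ : R^{n+2} → R^{n+1} × R^2` (for `0 ≤ k ≤ n` and a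
permutation `σ` of `{0,…,k}`, acting on the subset `{0,…,k}` of `{0,…,n}`): the linear map
sending `e_j` to `(c^n_{σ({0,…,j})}, e_0)` for `0 ≤ j ≤ k` and `e_j` to `(e_{j-1}, e_1)` for
`k+1 ≤ j ≤ n+1`. -/
noncomputable def hsd (R : Type*) [CommRing R] (c : (s : ℕ) → Fin (s + 1) → R) (n k : ℕ)
    (hk : k ≤ n) (σ : Equiv.Perm (Fin (k + 1))) :
    (Fin (n + 2) → R) →ₗ[R] (Fin (n + 1) → R) × (Fin 2 → R) :=
  ofVecs fun j =>
    if h : (j : ℕ) ≤ k then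
      (cS c ((Finset.Iic (⟨(j : ℕ), by omega⟩ : Fin (k + 1))).image
          fun a => Fin.castLE (by omega : k + 1 ≤ n + 1) (σ a)), Pi.single 0 1)
    else
      (Pi.single (⟨(j : ℕ) - 1, by have := j.isLt; omega⟩ : Fin (n + 1)) 1, Pi.single 1 1)

lemma ofVecs_single {R : Type*} [CommRing R] {a : ℕ} {M : Type*} [AddCommGroup M]
    [Module R M] (v : Fin a → M) (j : Fin a) : ofVecs v (Pi.single j (1 : R)) = v j := by
  simp [ofVecs, Pi.single_apply, ite_smul, Finset.sum_ite_eq']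

lemma comp_ofVecs {R : Type*} [CommRing R] {a : ℕ} {M N : Type*} [AddCommGroup M]
    [Module R M] [AddCommGroup N] [Module R N] (f : M →ₗ[R] N) (v : Fin a → M) :
    f.comp (ofVecs v) = ofVecs (fun j => f (v j)) := by
  ext t
  simp [ofVecs, map_sum, map_smul]

lemma image_swap_self {α : Type*} [DecidableEq α] (a b : α) (S : Finset α)
    (h : (a ∈ S ∧ b ∈ S) ∨ (a ∉ S ∧ b ∉ S)) : S.image (Equiv.swap a b) = S := by
  have hmap : ∀ x ∈ S, Equiv.swap a b x ∈ S := by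
    intro x hx
    rcases h with ⟨ha, hb⟩ | ⟨ha, hb⟩
    · rcases eq_or_ne x a with rfl | hxa
      · simpa [Equiv.swap_apply_left] using hb
      rcases eq_or_ne x b with rfl | hxb
      · simpa [Equiv.swap_apply_right] using ha
      · rwa [Equiv.swap_apply_of_ne_of_ne hxa hxb]
    · rcases eq_or_ne x a with rfl | hxa
      · exact absurd hx ha
      rcases eq_or_ne x b with rfl | hxb
      · exact absurd hx hb
      rwa [Equiv.swap_apply_of_ne_of_ne hxa hxb]
  apply Finset.eq_of_subset_of_card_le (Finset.image_subset_iff.mpr hmap)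
  rw [Finset.card_image_of_injective _ (Equiv.injective _)]

/-- **Statement 6.** For every `n ≥ 0`, every permutation `σ` of `{0,…,n}` and every
`0 ≤ i ≤ n-1`, one has `sd_n^σ ∘ ∂_i = sd_n^{σ∘(i,i+1)} ∘ ∂_i` as linear maps
`R^n → R^{n+1}`, where `(i,i+1)` is the transposition of `i` and `i+1`. -/
theorem stmt6 (R : Type*) [CommRing R] (n : ℕ) (c : (s : ℕ) → Fin (s + 1) → R)
    (hc : ∀ s, s ≤ n → ∑ j, c s j = 1)
    (σ : Equiv.Perm (Fin (n + 1))) (i : Fin n) :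
    (sd R c n σ).comp (face R n i.castSucc) =
      (sd R c n (σ * Equiv.swap i.castSucc i.succ)).comp (face R n i.castSucc) := by
  rw [face, comp_ofVecs, comp_ofVecs]
  congr 1
  funext j
  rw [sd, sd, ofVecs_single, ofVecs_single]
  refine congrArg (cS c) ?_
  have key : (Finset.Iic (i.castSucc.succAbove j)).image (Equiv.swap i.castSucc i.succ)
      = Finset.Iic (i.castSucc.succAbove j) := by
    apply image_swap_self
    rcases lt_or_ge (j : ℕ) (i : ℕ) with hji | hji
    · right
      have h1 : i.castSucc.succAbove j = j.castSucc :=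
        Fin.succAbove_of_castSucc_lt _ _ (by simp [Fin.lt_def, hji])
      rw [h1]
      simp only [Finset.mem_Iic, Fin.le_def, Fin.coe_castSucc, Fin.val_succ, not_le]
      omega
    · left
      have h1 : i.castSucc.succAbove j = j.succ :=
        Fin.succAbove_of_le_castSucc _ _ (by simp [Fin.le_def, hji])
      rw [h1]
      simp only [Finset.mem_Iic, Fin.le_def, Fin.coe_castSucc, Fin.val_succ]
      omega
  calc (Finset.Iic (i.castSucc.succAbove j)).image ⇑σ
      = ((Finset.Iic (i.castSucc.succAbove j)).image
          (Equiv.swap i.castSucc i.succ)).image σ := by rw [key]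
    _ = (Finset.Iic (i.castSucc.succAbove j)).image
          ⇑(σ * Equiv.swap i.castSucc i.succ) := by rw [Finset.image_image]; rfl
end

section
/- For all integers 0 ≤ i < k ≤ n and every permutation σ of {0,…,k}, one has the equality of linear maps R^{n+1} → R^{n+1} × R^2: sd_{n,k}^σ ∘ ∂_i = sd_{n,k}^{σ∘(i,i+1)} ∘ ∂_i, where (i,i+1) denotes the transposition of i and i+1 in {0,…,k} and ∂_i : R^{n+1} → R^{n+2} is the i-th face map. -/
lemma swap_Iic {k : ℕ} (i : ℕ) (hi : i + 1 ≤ k) (b : Fin (k + 1)) (hb : (b : ℕ) ≠ i) :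
    (Finset.Iic b).image
      (Equiv.swap (⟨i, by omega⟩ : Fin (k + 1)) (⟨i + 1, by omega⟩ : Fin (k + 1))) =
    Finset.Iic b := by
  set τ := Equiv.swap (⟨i, by omega⟩ : Fin (k + 1)) (⟨i + 1, by omega⟩ : Fin (k + 1)) with hτ
  have key : ∀ x : Fin (k + 1), ((τ x : ℕ) ≤ b ↔ (x : ℕ) ≤ b) := by
    intro x
    rcases eq_or_ne x ⟨i, by omega⟩ with rfl | h1
    · rw [hτ, Equiv.swap_apply_left]; simp only []; omega
    rcases eq_or_ne x ⟨i + 1, by omega⟩ with rfl | h2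
    · rw [hτ, Equiv.swap_apply_right]; simp only []; omega
    · rw [hτ, Equiv.swap_apply_of_ne_of_ne h1 h2]
  ext x
  simp only [Finset.mem_image, Finset.mem_Iic]
  constructor
  · rintro ⟨y, hy, rfl⟩
    exact (Fin.le_def.mpr ((key y).mpr (Fin.le_def.mp hy)))
  · intro hx
    refine ⟨τ x, ?_, by rw [hτ, Equiv.swap_apply_self]⟩
    have h2 := key (τ x)
    rw [hτ, Equiv.swap_apply_self] at h2
    exact Fin.le_def.mpr (h2.mp (Fin.le_def.mp hx))

/-- **Statement 10.** For all `0 ≤ i < k ≤ n` and every permutation `σ` of `{0,…,k}`, one has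
`sd_{n,k}^σ ∘ ∂_i = sd_{n,k}^{σ∘(i,i+1)} ∘ ∂_i` as linear maps `R^{n+1} → R^{n+1} × R^2`,
where `(i,i+1)` is the transposition of `i` and `i+1` in `{0,…,k}`. -/
theorem stmt10 (R : Type*) [CommRing R] (n k i : ℕ) (hik : i < k) (hk : k ≤ n)
    (c : (s : ℕ) → Fin (s + 1) → R) (hc : ∀ s, s ≤ n → ∑ j, c s j = 1)
    (σ : Equiv.Perm (Fin (k + 1))) :
    (hsd R c n k hk σ).comp (face R (n + 1) ⟨i, by omega⟩) =
      (hsd R c n k hk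
        (σ * Equiv.swap (⟨i, by omega⟩ : Fin (k + 1)) (⟨i + 1, by omega⟩ : Fin (k + 1)))).comp
        (face R (n + 1) ⟨i, by omega⟩) := by

  apply (Pi.basisFun R (Fin (n + 1))).ext
  intro j
  have hface : face R (n + 1) ⟨i, by omega⟩ (Pi.single j 1) =
      Pi.single ((⟨i, by omega⟩ : Fin (n + 2)).succAbove j) 1 := by
    simpa [face] using ofVecs_single (R := R) (M := Fin (n + 2) → R)
      (fun l => Pi.single ((⟨i, by omega⟩ : Fin (n + 2)).succAbove l) (1 : R)) j
  simp only [LinearMap.comp_apply, Pi.basisFun_apply, hface, hsd, ofVecs_single]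
  set m := (⟨i, by omega⟩ : Fin (n + 2)).succAbove j with hm
  have hmi : (m : ℕ) ≠ i := by
    intro h
    exact (⟨i, by omega⟩ : Fin (n + 2)).succAbove_ne j (Fin.ext h.symm).symm
  split
  · next h =>
    congr 2
    have : (Finset.Iic (⟨(m : ℕ), by omega⟩ : Fin (k + 1))).image
        (fun a => Fin.castLE (by omega : k + 1 ≤ n + 1)
          ((σ * Equiv.swap (⟨i, by omega⟩ : Fin (k + 1)) (⟨i + 1, by omega⟩ : Fin (k + 1))) a)) =
        ((Finset.Iic (⟨(m : ℕ), by omega⟩ : Fin (k + 1))).image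
          (Equiv.swap (⟨i, by omega⟩ : Fin (k + 1)) (⟨i + 1, by omega⟩ : Fin (k + 1)))).image
        (fun a => Fin.castLE (by omega : k + 1 ≤ n + 1) (σ a)) := by
      rw [Finset.image_image]
      rfl
    rw [this, swap_Iic i (by omega) _ (by simpa using hmi)]
  · rfl
end

section
/- Let k be an infinite field and m ≥ 1 an integer. Let P ⊆ k[X_1,…,X_m] be a prime ideal such that the Krull dimension of k[X_1,…,X_m]/P is at least 1. Then there exists a homogeneous linear form l = a_1 X_1 + … + a_m X_m with coefficients in k, not all zero, whose image in the quotient ring k[X_1,…,X_m]/P is transcendental over k. Consequently, for every N ≥ 0, the images of 1, l, l^2, …, l^N in k[X_1,…,X_m]/P are linearly independent over k. -/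
open MvPolynomial

/-- Powers of a transcendental element are linearly independent. -/
lemma transcendental_linearIndependent_pow {k R : Type*} [Field k] [CommRing R] [Algebra k R]
    {x : R} (H : Transcendental k x) (N : ℕ) :
    LinearIndependent k (fun j : Fin (N + 1) => x ^ (j : ℕ)) := by
  rw [transcendental_iff] at H
  refine Fintype.linearIndependent_iff.2 fun g hg j => ?_
  have hp : (∑ j : Fin (N + 1), Polynomial.C (g j) * Polynomial.X ^ (j : ℕ)) = 0 := by
    apply H
    simpa [Algebra.smul_def] using hg
  have := congrArg (fun p => Polynomial.coeff p (j : ℕ)) hp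
  simpa [Polynomial.finset_sum_coeff, Polynomial.coeff_C_mul, Polynomial.coeff_X_pow,
    Finset.sum_ite_eq', Fin.val_eq_val] using this

/-- If the quotient of `k[X_1, …, X_m]` by a prime has Krull dimension at least 1, some
variable maps to a transcendental element. -/
lemma exists_X_transcendental (k : Type*) [Field k] (m : ℕ)
    (P : Ideal (MvPolynomial (Fin m) k)) (hP : P.IsPrime)
    (hdim : 1 ≤ ringKrullDim (MvPolynomial (Fin m) k ⧸ P)) :
    ∃ i : Fin m, Transcendental k (Ideal.Quotient.mk P (MvPolynomial.X i)) := by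
  by_contra h
  push_neg at h
  simp only [Transcendental, not_not] at h
  have hadj : Algebra.adjoin k
      (Set.range fun i : Fin m => Ideal.Quotient.mk P (MvPolynomial.X i)) = ⊤ := by
    have h1 := MvPolynomial.adjoin_range_X (R := k) (σ := Fin m)
    have h2 : Set.range (fun i : Fin m => Ideal.Quotient.mk P (MvPolynomial.X i)) =
        (Ideal.Quotient.mkₐ k P) '' Set.range (X : Fin m → MvPolynomial (Fin m) k) := by
      rw [← Set.range_comp]; rfl
    rw [h2, Algebra.adjoin_image, h1, Algebra.map_top,
      (AlgHom.range_eq_top _).mpr (Ideal.Quotient.mkₐ_surjective k P)]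
  have : Algebra.IsIntegral k (MvPolynomial (Fin m) k ⧸ P) := by
    rw [← integralClosure_eq_top_iff, eq_top_iff, ← hadj]
    apply Algebra.adjoin_le
    rintro _ ⟨i, rfl⟩
    exact (h i).isIntegral
  have hfield : IsField (MvPolynomial (Fin m) k ⧸ P) :=
    isField_of_isIntegral_of_isField' (Field.toIsField k)
  rw [ringKrullDim_eq_zero_of_isField hfield] at hdim
  norm_num at hdim

/-- **Statement 15.** Let `k` be an infinite field and `m ≥ 1`.  Let `P` be a prime ideal of
`k[X_1, …, X_m]` such that the Krull dimension of the quotient is at least `1`.  Then there is a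
homogeneous linear form `l = a_1 X_1 + ⋯ + a_m X_m`, with coefficients not all zero, whose image
in `k[X_1, …, X_m] ⧸ P` is transcendental over `k`; consequently, for every `N ≥ 0` the images of
`1, l, l², …, l^N` are linearly independent over `k`. -/
theorem stmt15 (k : Type*) [Field k] [Infinite k] (m : ℕ) (hm : 1 ≤ m)
    (P : Ideal (MvPolynomial (Fin m) k)) (hP : P.IsPrime)
    (hdim : 1 ≤ ringKrullDim (MvPolynomial (Fin m) k ⧸ P)) :
    ∃ a : Fin m → k, a ≠ 0 ∧
      Transcendental k
        (Ideal.Quotient.mk P (∑ i, MvPolynomial.C (a i) * MvPolynomial.X i)) ∧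
      ∀ N : ℕ, LinearIndependent k (fun j : Fin (N + 1) =>
        (Ideal.Quotient.mk P (∑ i, MvPolynomial.C (a i) * MvPolynomial.X i)) ^ (j : ℕ)) := by
  classical
  obtain ⟨i, hi⟩ := exists_X_transcendental k m P hP hdim
  refine ⟨Pi.single i 1, ?_, ?_, ?_⟩
  · intro h0
    have := congrFun h0 i
    simp at this
  · have hsum : (∑ j : Fin m, (MvPolynomial.C ((Pi.single i 1 : Fin m → k) j) : MvPolynomial (Fin m) k) * MvPolynomial.X j) =
        (MvPolynomial.X i : MvPolynomial (Fin m) k) := by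
      rw [Finset.sum_eq_single i]
      · simp
      · intro j _ hj
        simp [Pi.single_apply, hj]
      · simp
    rw [hsum]
    exact hi
  · intro N
    have hsum : (∑ j : Fin m, (MvPolynomial.C ((Pi.single i 1 : Fin m → k) j) : MvPolynomial (Fin m) k) * MvPolynomial.X j) =
        (MvPolynomial.X i : MvPolynomial (Fin m) k) := by
      rw [Finset.sum_eq_single i]
      · simp
      · intro j _ hj
        simp [Pi.single_apply, hj]
      · simp
    rw [hsum]
    exact transcendental_linearIndependent_pow hi N
end
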